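/- For every d, D ∈ ℕ there exists c > 0 such that: for every polynomial q in d real variables of degree ≤ D and every cube Q ⊆ ℝ^d, there is a subcube Q' ⊆ Q of side length c·ℓ_Q with sup_{x∈Q'} |q(x)| ≤ 2·inf_{x∈Q'} |q(x)|. -/

import Mathlib

/-!
On a compact metric space `K`, the closed unit ball of a finite-dimensional space of continuous
functions is compact, so these functions are uniformly equicontinuous relative to their norm:
there is `δ > 0` with `|f y - f z| ≤ ‖f‖ / 2` whenever `dist y z < δ`. For a polynomial `q` of
degree `≤ D` on the unit cube, any subcube of side `< δ` through a maximum point of `|q|`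
therefore carries `‖q‖ / 2 ≤ |q| ≤ ‖q‖`. An affine change of variables keeps the degree bound
and maps the unit cube onto an arbitrary cube.
-/

open MvPolynomial

/-- The axis-parallel cube in `ℝ^d` with lower corner `x` and side length `ℓ`. -/
def Cube {d : ℕ} (x : Fin d → ℝ) (ℓ : ℝ) : Set (Fin d → ℝ) :=
  {y | ∀ i, y i ∈ Set.Icc (x i) (x i + ℓ)}

theorem Submodule.exists_pos_forall_dist_apply_le_mul_norm {K E : Type*} [PseudoMetricSpace K]
    [CompactSpace K] [NormedAddCommGroup E] [NormedSpace ℝ E]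
    (W : Submodule ℝ C(K, E)) [FiniteDimensional ℝ W] {ε : ℝ} (hε : 0 < ε) :
    ∃ δ > 0, ∀ f ∈ W, ∀ y z, dist y z < δ → dist (f y) (f z) ≤ ε * ‖f‖ := by
  have hB : IsCompact (Subtype.val '' Metric.closedBall (0 : W) 1) :=
    (isCompact_closedBall 0 1).image continuous_subtype_val
  obtain ⟨δ, hδ, hunif⟩ := Metric.uniformContinuousOn_iff.mp
    ((hB.prod isCompact_univ).uniformContinuousOn_of_continuous
      (continuous_eval (F := C(K, E))).continuousOn) ε hε
  refine ⟨δ, hδ, fun f hf y z hyz => ?_⟩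
  rcases eq_or_ne f 0 with rfl | hf0
  · simp
  have hnorm : 0 < ‖f‖ := norm_pos_iff.mpr hf0
  have hg : ‖f‖⁻¹ • f ∈ Subtype.val '' Metric.closedBall (0 : W) 1 :=
    ⟨⟨‖f‖⁻¹ • f, W.smul_mem _ hf⟩, by simp [norm_smul, hnorm.ne'], rfl⟩
  have := hunif (_, y) ⟨hg, trivial⟩ (_, z) ⟨hg, trivial⟩ (by simpa [Prod.dist_eq] using hyz)
  simp only [ContinuousMap.smul_apply, dist_smul₀, norm_inv, norm_norm] at this
  rw [inv_mul_lt_iff₀ hnorm] at this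
  linarith

theorem Real.sSup_le_mul_sInf {S : Set ℝ} (hS : S.Nonempty) {k : ℝ} (hk : 0 < k)
    (h : ∀ a ∈ S, ∀ b ∈ S, a ≤ k * b) : sSup S ≤ k * sInf S := by
  rw [← div_le_iff₀' hk]
  exact le_csInf hS fun b hb => (div_le_iff₀' hk).2 (csSup_le hS fun a ha => h a ha b hb)

theorem totalDegree_bind₁_le {σ τ R : Type*} [CommSemiring R] (f : σ → MvPolynomial τ R)
    {k : ℕ} (hf : ∀ i, (f i).totalDegree ≤ k) (q : MvPolynomial σ R) :
    (bind₁ f q).totalDegree ≤ q.totalDegree * k := by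
  conv_lhs => rw [q.as_sum]
  rw [map_sum]
  refine (totalDegree_finsetSum _ _).trans (Finset.sup_le fun m hm => ?_)
  rw [bind₁_monomial]
  calc (C (coeff m q) * ∏ i ∈ m.support, f i ^ m i).totalDegree
      ≤ ∑ i ∈ m.support, m i * k := by
        refine (totalDegree_mul _ _).trans ?_
        rw [totalDegree_C, zero_add]
        refine (totalDegree_finsetProd _ _).trans (Finset.sum_le_sum fun i _ => ?_)
        exact (totalDegree_pow _ _).trans (Nat.mul_le_mul_left _ (hf i))
    _ = (m.sum fun _ e => e) * k := by rw [Finsupp.sum, Finset.sum_mul]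
    _ ≤ q.totalDegree * k := Nat.mul_le_mul_right _ (le_totalDegree hm)

section Cube

variable {d : ℕ}

theorem cube_eq_pi (x : Fin d → ℝ) (ℓ : ℝ) :
    Cube x ℓ = Set.univ.pi fun i => Set.Icc (x i) (x i + ℓ) :=
  Set.ext fun _ => Set.mem_univ_pi.symm

theorem isCompact_cube (x : Fin d → ℝ) (ℓ : ℝ) : IsCompact (Cube x ℓ) :=
  cube_eq_pi x ℓ ▸ isCompact_univ_pi fun _ => isCompact_Icc

theorem dist_le_of_mem_cube {u y z : Fin d → ℝ} {c : ℝ} (hc : 0 ≤ c) (hy : y ∈ Cube u c)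
    (hz : z ∈ Cube u c) : dist y z ≤ c :=
  (dist_pi_le_iff hc).2 fun i => by
    rw [Real.dist_eq, abs_le]
    constructor <;> linarith [(hy i).1, (hy i).2, (hz i).1, (hz i).2]

theorem exists_cube_subset_and_mem {a x : Fin d → ℝ} {ℓ c : ℝ} (hx : x ∈ Cube a ℓ)
    (hc : 0 ≤ c) (hcℓ : c ≤ ℓ) : ∃ u, Cube u c ⊆ Cube a ℓ ∧ x ∈ Cube u c := by
  refine ⟨fun i => min (x i) (a i + ℓ - c), fun y hy i => ?_, fun i => ?_⟩
  · have hlow : a i ≤ min (x i) (a i + ℓ - c) := le_min (hx i).1 (by linarith)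
    have hupp := min_le_right (x i) (a i + ℓ - c)
    exact ⟨hlow.trans (hy i).1, (hy i).2.trans (by linarith)⟩
  · constructor
    · exact min_le_left _ _
    · dsimp only
      rcases min_choice (x i) (a i + ℓ - c) with h | h <;> rw [h] <;> linarith [(hx i).2]

theorem cube_add_mul_eq_image (x u : Fin d → ℝ) {ℓ : ℝ} (hℓ : 0 < ℓ) (c : ℝ) :
    Cube (fun i => x i + ℓ * u i) (c * ℓ) = (fun t i => x i + ℓ * t i) '' Cube u c := by
  ext y
  constructor
  · intro hy
    refine ⟨fun i => (y i - x i) / ℓ, fun i => ?_, funext fun i => by field_simp; ring⟩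
    have := (hy i).1; have := (hy i).2
    constructor
    · rw [le_div_iff₀ hℓ]; linarith
    · rw [div_le_iff₀ hℓ]; linarith
  · rintro ⟨t, ht, rfl⟩ i
    have := (ht i).1; have := (ht i).2
    constructor <;> nlinarith

end Cube

noncomputable def MvPolynomial.toContinuousMapOn {σ : Type*} (K : Set (σ → ℝ)) :
    MvPolynomial σ ℝ →ₗ[ℝ] C(K, ℝ) where
  toFun p := ⟨fun y => eval (y : σ → ℝ) p, (continuous_eval p).comp continuous_subtype_val⟩
  map_add' p r := by ext; simp
  map_smul' a p := by ext; simp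

theorem exists_subcube_forall_abs_eval_le_two_mul (d D : ℕ) :
    ∃ c > (0 : ℝ), ∀ q : MvPolynomial (Fin d) ℝ, q.totalDegree ≤ D →
      ∃ u, Cube u c ⊆ Cube 0 1 ∧
        ∀ y ∈ Cube u c, ∀ z ∈ Cube u c, |eval z q| ≤ 2 * |eval y q| := by
  let K := Cube (0 : Fin d → ℝ) 1
  have : CompactSpace K := isCompact_iff_compactSpace.mp (isCompact_cube 0 1)
  obtain ⟨δ, hδ, hmod⟩ := ((restrictTotalDegree (Fin d) ℝ D).map
    (toContinuousMapOn K)).exists_pos_forall_dist_apply_le_mul_norm one_half_pos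
  refine ⟨min (δ / 2) 1, by positivity, fun q hq => ?_⟩
  obtain ⟨x₀, hx₀, hmax⟩ := (isCompact_cube 0 1).exists_isMaxOn ⟨0, by simp [Cube]⟩
    (continuous_abs.comp (continuous_eval q)).continuousOn
  obtain ⟨u, hu, hx₀u⟩ :=
    exists_cube_subset_and_mem (c := min (δ / 2) 1) hx₀ (by positivity) (min_le_right _ _)
  refine ⟨u, hu, fun y hy z hz => ?_⟩
  have hnorm : ‖toContinuousMapOn K q‖ ≤ |eval x₀ q| :=
    (ContinuousMap.norm_le _ (abs_nonneg _)).2 fun w => hmax w.2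
  have hdist : dist (⟨y, hu hy⟩ : K) ⟨x₀, hx₀⟩ < δ := by
    rw [Subtype.dist_eq]
    linarith [dist_le_of_mem_cube (by positivity) hy hx₀u, min_le_left (δ / 2) 1]
  have hclose : |eval y q - eval x₀ q| ≤ |eval x₀ q| / 2 := by
    have := hmod _ ⟨q, (mem_restrictTotalDegree _ _ _).2 hq, rfl⟩ _ _ hdist
    rw [Real.dist_eq] at this
    exact this.trans (by linarith)
  calc |eval z q| ≤ |eval x₀ q| := hmax (hu hz)
    _ ≤ 2 * |eval y q| := by
      linarith [abs_sub_abs_le_abs_sub (eval x₀ q) (eval y q), abs_sub_comm (eval y q) (eval x₀ q)]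

/-- For every `d, D ∈ ℕ` there is `c > 0` such that for every polynomial `q` in `d` real
variables of degree `≤ D` and every cube `Q`, there is a subcube `Q' ⊆ Q` of side length
`c·ℓ_Q` with `sup_{Q'} |q| ≤ 2 · inf_{Q'} |q|`. -/
theorem stmt_11 (d D : ℕ) :
    ∃ c > (0 : ℝ), ∀ q : MvPolynomial (Fin d) ℝ, q.totalDegree ≤ D →
      ∀ (x : Fin d → ℝ) (ℓ : ℝ), 0 < ℓ →
        ∃ x' : Fin d → ℝ, Cube x' (c * ℓ) ⊆ Cube x ℓ ∧
          sSup ((fun y => |MvPolynomial.eval y q|) '' Cube x' (c * ℓ)) ≤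
            2 * sInf ((fun y => |MvPolynomial.eval y q|) '' Cube x' (c * ℓ)) := by
  obtain ⟨c, hc, hunit⟩ := exists_subcube_forall_abs_eval_le_two_mul d D
  refine ⟨c, hc, fun q hq x ℓ hℓ => ?_⟩
  set qA := bind₁ (fun i => C (x i) + C ℓ * X i) q
  have hevalA : ∀ t, eval t qA = eval (fun i => x i + ℓ * t i) q := fun t => by
    simp only [qA, eval, eval₂Hom_bind₁]; simp
  have hdeg : qA.totalDegree ≤ D := by
    refine (totalDegree_bind₁_le (k := 1) _ (fun i => ?_) q).trans (by simpa using hq)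
    exact (totalDegree_add _ _).trans (max_le (by simp) ((totalDegree_mul _ _).trans (by simp)))
  obtain ⟨u, hu, hharnack⟩ := hunit qA hdeg
  refine ⟨fun i => x i + ℓ * u i, ?_, ?_⟩
  · have hQ : Cube x ℓ = (fun t i => x i + ℓ * t i) '' Cube 0 1 := by
      simpa using cube_add_mul_eq_image x 0 hℓ 1
    rw [cube_add_mul_eq_image x u hℓ c, hQ]
    exact Set.image_mono hu
  · rw [cube_add_mul_eq_image x u hℓ c, Set.image_image]
    have hne : (Cube u c).Nonempty := ⟨u, fun i => ⟨le_rfl, by linarith⟩⟩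
    refine Real.sSup_le_mul_sInf (hne.image _) two_pos ?_
    rintro _ ⟨z, hz, rfl⟩ _ ⟨y, hy, rfl⟩
    simpa only [hevalA] using hharnack y hy z hz
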